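/- Let q be a prime power and A = 𝔽_q[T]. Let P ∈ A be a monic irreducible polynomial, α ∈ 𝔽_q^×, and suppose the Mersenne number M_P = α·C_P(1) is irreducible in A; let ℘ be the monic irreducible polynomial associate to M_P. Then the P-th cyclotomic polynomial Φ_P(x) = C_P(x)/x, reduced modulo ℘, is a product of q^{deg P} − 1 distinct monic linear factors in (A/℘A)[x] over the field A/℘A. -/

import Mathlib

open Polynomial

/-- Compositional iterates of the Carlitz polynomial `C_T(x) = T·x + x^q`, so that
`carlitzTpow F n = C_{T^n}(x) ∈ (𝔽_q[T])[x]` (here `q = Fintype.card F`). -/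
noncomputable def carlitzTpow (F : Type) [Field F] [Fintype F] : ℕ → Polynomial (Polynomial F)
  | 0 => X
  | n + 1 => (carlitzTpow F n).comp (Polynomial.C Polynomial.X * X + X ^ (Fintype.card F))

/-- The Carlitz module polynomial `C_m(x) ∈ (𝔽_q[T])[x]` for `m ∈ A = 𝔽_q[T]`:
it is determined by `𝔽_q`-linearity in `m` together with
`C_{T^n}(x) = C_T(C_T(⋯ C_T(x)⋯))` (`n`-fold composition of `C_T(x) = T·x + x^q`). -/
noncomputable def carlitz (F : Type) [Field F] [Fintype F] (m : Polynomial F) :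
    Polynomial (Polynomial F) :=
  m.sum fun i c => Polynomial.C (Polynomial.C c) * carlitzTpow F i

/-- Evaluation `C_m(α) ∈ 𝔽_q[T]` of the Carlitz polynomial `C_m(x)` at `α ∈ 𝔽_q[T]`. -/
noncomputable def carlitzEval (F : Type) [Field F] [Fintype F] (m α : Polynomial F) :
    Polynomial F :=
  (carlitz F m).eval α

variable (F : Type) [Field F] [Fintype F]

lemma carlitzTpow_succ (n : ℕ) :
    carlitzTpow F (n + 1) = (carlitzTpow F n).comp
      (Polynomial.C Polynomial.X * X + X ^ (Fintype.card F)) := rfl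

lemma carlitz_zero : carlitz F 0 = 0 := Polynomial.sum_zero_index _

lemma carlitz_monomial (n : ℕ) (c : F) :
    carlitz F (Polynomial.monomial n c) = Polynomial.C (Polynomial.C c) * carlitzTpow F n := by
  unfold carlitz
  rw [Polynomial.sum_monomial_index]
  simp

lemma carlitz_add (a b : Polynomial F) :
    carlitz F (a + b) = carlitz F a + carlitz F b := by
  unfold carlitz
  rw [Polynomial.sum_add_index] <;> intros <;> simp [add_mul]

lemma carlitz_C_mul (c : F) (a : Polynomial F) :
    carlitz F (Polynomial.C c * a) = Polynomial.C (Polynomial.C c) * carlitz F a := by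
  unfold carlitz
  rw [← Polynomial.smul_eq_C_mul, Polynomial.sum_smul_index a c _ (by intros; simp)]
  rw [Polynomial.sum_def, Polynomial.sum_def, Finset.mul_sum]
  refine Finset.sum_congr rfl fun i _ => ?_
  · rcases eq_or_ne (a.coeff i) 0 with h | h
    · simp [h]
    · simp [mul_assoc]

lemma carlitz_one : carlitz F 1 = X := by
  have : (1 : Polynomial F) = Polynomial.monomial 0 1 := by simp
  rw [this, carlitz_monomial]
  simp [carlitzTpow]

-- char p facts
lemma card_pow_add (u v : Polynomial (Polynomial F)) :
    (u + v) ^ (Fintype.card F) = u ^ (Fintype.card F) + v ^ (Fintype.card F) := by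
  haveI : CharP F (ringChar F) := ringChar.charP F
  obtain ⟨n, hp, hcard⟩ := FiniteField.card F (ringChar F)
  haveI : Fact (ringChar F).Prime := ⟨hp⟩
  rw [hcard]
  exact add_pow_char_pow u v (ringChar F) n

lemma C_pow_card (c : F) :
    (Polynomial.C (Polynomial.C c) : Polynomial (Polynomial F)) ^ (Fintype.card F)
      = Polynomial.C (Polynomial.C c) := by
  rw [← map_pow, ← map_pow, FiniteField.pow_card]

lemma carlitzTpow_comp_add (n : ℕ) (u v : Polynomial (Polynomial F)) :
    (carlitzTpow F n).comp (u + v) = (carlitzTpow F n).comp u + (carlitzTpow F n).comp v := by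
  induction n generalizing u v with
  | zero => simp [carlitzTpow]
  | succ n ih =>
      rw [carlitzTpow_succ, Polynomial.comp_assoc, Polynomial.comp_assoc, Polynomial.comp_assoc]
      simp only [Polynomial.add_comp, Polynomial.mul_comp, Polynomial.C_comp,
        Polynomial.X_comp, Polynomial.pow_comp]
      rw [card_pow_add, mul_add]
      rw [show Polynomial.C Polynomial.X * u + Polynomial.C Polynomial.X * v +
        (u ^ Fintype.card F + v ^ Fintype.card F) =
        (Polynomial.C Polynomial.X * u + u ^ Fintype.card F) +
        (Polynomial.C Polynomial.X * v + v ^ Fintype.card F) by ring]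
      exact ih _ _

lemma carlitzTpow_comp_C_mul (n : ℕ) (c : F) (u : Polynomial (Polynomial F)) :
    (carlitzTpow F n).comp (Polynomial.C (Polynomial.C c) * u)
      = Polynomial.C (Polynomial.C c) * (carlitzTpow F n).comp u := by
  induction n generalizing u with
  | zero => simp [carlitzTpow]
  | succ n ih =>
      rw [carlitzTpow_succ, Polynomial.comp_assoc, Polynomial.comp_assoc]
      simp only [Polynomial.add_comp, Polynomial.mul_comp, Polynomial.C_comp,
        Polynomial.X_comp, Polynomial.pow_comp]
      rw [mul_pow, C_pow_card, show Polynomial.C Polynomial.X *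
        (Polynomial.C (Polynomial.C c) * u) + Polynomial.C (Polynomial.C c) * u ^ Fintype.card F
        = Polynomial.C (Polynomial.C c) *
          (Polynomial.C Polynomial.X * u + u ^ Fintype.card F) by ring]
      exact ih _

lemma carlitz_comp_add (m : Polynomial F) (u v : Polynomial (Polynomial F)) :
    (carlitz F m).comp (u + v) = (carlitz F m).comp u + (carlitz F m).comp v := by
  induction m using Polynomial.induction_on' with
  | add a b ha hb => simp only [carlitz_add, Polynomial.add_comp, ha, hb]; ring
  | monomial n c =>
      simp only [carlitz_monomial, Polynomial.mul_comp, Polynomial.C_comp,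
        carlitzTpow_comp_add, mul_add]

lemma carlitz_comp_C_mul (m : Polynomial F) (c : F) (u : Polynomial (Polynomial F)) :
    (carlitz F m).comp (Polynomial.C (Polynomial.C c) * u)
      = Polynomial.C (Polynomial.C c) * (carlitz F m).comp u := by
  induction m using Polynomial.induction_on' with
  | add a b ha hb => simp only [carlitz_add, Polynomial.add_comp, ha, hb]; ring
  | monomial n c' =>
      simp only [carlitz_monomial, Polynomial.mul_comp, Polynomial.C_comp,
        carlitzTpow_comp_C_mul]
      ring

lemma carlitz_X_mul (m : Polynomial F) :
    carlitz F (X * m) = (carlitz F m).comp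
      (Polynomial.C Polynomial.X * X + X ^ (Fintype.card F)) := by
  induction m using Polynomial.induction_on' with
  | add a b ha hb => rw [mul_add, carlitz_add, carlitz_add, Polynomial.add_comp, ha, hb]
  | monomial n c =>
      rw [show (X : Polynomial F) * Polynomial.monomial n c = Polynomial.monomial (n+1) c by
        rw [Polynomial.X_mul_monomial]]
      rw [carlitz_monomial, carlitz_monomial, Polynomial.mul_comp, Polynomial.C_comp,
        carlitzTpow_succ]

lemma carlitz_Xpow_mul (k : ℕ) (m : Polynomial F) :
    carlitz F (X ^ k * m) = (carlitz F m).comp (carlitzTpow F k) := by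
  induction k generalizing m with
  | zero =>
      simp [carlitzTpow]
  | succ k ih =>
      rw [show (X:Polynomial F) ^ (k+1) * m = X * (X ^ k * m) by ring, carlitz_X_mul, ih,
        Polynomial.comp_assoc, ← carlitzTpow_succ]

lemma carlitz_mul (m m' : Polynomial F) :
    carlitz F (m * m') = (carlitz F m).comp (carlitz F m') := by
  induction m' using Polynomial.induction_on' with
  | add a b ha hb =>
      rw [mul_add, carlitz_add, carlitz_add, ha, hb, carlitz_comp_add]
  | monomial n c =>
      rw [show m * Polynomial.monomial n c = Polynomial.C c * (X ^ n * m) by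
        rw [← Polynomial.C_mul_X_pow_eq_monomial]; ring]
      rw [carlitz_C_mul, carlitz_Xpow_mul, carlitz_monomial, carlitz_comp_C_mul]

lemma carlitzTpow_eval_zero (n : ℕ) : (carlitzTpow F n).eval 0 = 0 := by
  induction n with
  | zero => simp [carlitzTpow]
  | succ n ih =>
      rw [carlitzTpow_succ, Polynomial.eval_comp]
      have hq : Fintype.card F ≠ 0 := Fintype.card_ne_zero
      simp [zero_pow hq, ih]

lemma carlitz_eval_zero (m : Polynomial F) : (carlitz F m).eval 0 = 0 := by
  induction m using Polynomial.induction_on' with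
  | add a b ha hb => rw [carlitz_add]; simp [ha, hb]
  | monomial n c => rw [carlitz_monomial]; simp [carlitzTpow_eval_zero]

lemma carlitzEval_mul (m m' x : Polynomial F) :
    carlitzEval F (m * m') x = carlitzEval F m (carlitzEval F m' x) := by
  unfold carlitzEval
  rw [carlitz_mul, Polynomial.eval_comp]

lemma carlitzEval_add (m m' x : Polynomial F) :
    carlitzEval F (m + m') x = carlitzEval F m x + carlitzEval F m' x := by
  unfold carlitzEval
  rw [carlitz_add, Polynomial.eval_add]

lemma carlitzEval_one (x : Polynomial F) : carlitzEval F 1 x = x := by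
  unfold carlitzEval; rw [carlitz_one]; simp

-- degrees
lemma carlitzTpow_monic (n : ℕ) : (carlitzTpow F n).Monic ∧
    (carlitzTpow F n).natDegree = Fintype.card F ^ n := by
  have hq1 : 1 < Fintype.card F := Fintype.one_lt_card
  have hlt : (Polynomial.C Polynomial.X * X : Polynomial (Polynomial F)).degree
      < (X ^ (Fintype.card F) : Polynomial (Polynomial F)).degree := by
    rw [Polynomial.degree_X_pow]
    refine lt_of_le_of_lt (le_trans (Polynomial.degree_mul_le _ _)
      (add_le_add Polynomial.degree_C_le Polynomial.degree_X_le)) ?_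
    rw [zero_add]; exact_mod_cast hq1
  have hφm : (Polynomial.C Polynomial.X * X + X ^ (Fintype.card F) :
      Polynomial (Polynomial F)).Monic := by
    rw [add_comm]; exact (Polynomial.monic_X_pow _).add_of_left hlt
  have hφd : (Polynomial.C Polynomial.X * X + X ^ (Fintype.card F) :
      Polynomial (Polynomial F)).natDegree = Fintype.card F :=
    Polynomial.natDegree_eq_of_degree_eq_some
      (by rw [Polynomial.degree_add_eq_right_of_degree_lt hlt, Polynomial.degree_X_pow])
  induction n with
  | zero => exact ⟨Polynomial.monic_X, by simp [carlitzTpow]⟩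
  | succ n ih =>
      rw [carlitzTpow_succ]
      exact ⟨ih.1.comp hφm (by rw [hφd]; omega),
        by rw [Polynomial.natDegree_comp, ih.2, hφd, pow_succ]⟩

lemma carlitz_monic (m : Polynomial F) (hm : m.Monic) : (carlitz F m).Monic ∧
    (carlitz F m).natDegree = Fintype.card F ^ m.natDegree := by
  have hq1 : 1 < Fintype.card F := Fintype.one_lt_card
  set d := m.natDegree with hd
  have hrw : carlitz F m = (∑ i ∈ Finset.range d,
      Polynomial.C (Polynomial.C (m.coeff i)) * carlitzTpow F i) + carlitzTpow F d := by
    unfold carlitz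
    rw [Polynomial.sum_over_range' m (by intros; simp) (d+1) (lt_add_one _),
      Finset.sum_range_succ, hm.coeff_natDegree]
    simp
  have hdeg : (∑ i ∈ Finset.range d,
      Polynomial.C (Polynomial.C (m.coeff i)) * carlitzTpow F i).degree
      < (carlitzTpow F d).degree := by
    rw [Polynomial.degree_eq_natDegree (carlitzTpow_monic F d).1.ne_zero,
      (carlitzTpow_monic F d).2]
    refine lt_of_le_of_lt (Polynomial.degree_sum_le _ _) ?_
    rw [Finset.sup_lt_iff (by exact_mod_cast WithBot.bot_lt_coe _)]
    intro i hi
    refine lt_of_le_of_lt (le_trans (Polynomial.degree_mul_le _ _)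
      (add_le_add Polynomial.degree_C_le le_rfl)) ?_
    rw [zero_add, Polynomial.degree_eq_natDegree (carlitzTpow_monic F i).1.ne_zero,
      (carlitzTpow_monic F i).2]
    exact_mod_cast Nat.pow_lt_pow_right hq1 (Finset.mem_range.mp hi)
  constructor
  · rw [hrw]; exact (carlitzTpow_monic F d).1.add_of_right hdeg
  · rw [hrw]
    refine Polynomial.natDegree_eq_of_degree_eq_some ?_
    rw [Polynomial.degree_add_eq_right_of_degree_lt hdeg,
      Polynomial.degree_eq_natDegree (carlitzTpow_monic F d).1.ne_zero,
      (carlitzTpow_monic F d).2]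

/-- If the Mersenne number `M_P = α·C_P(1)` is irreducible with monic irreducible
associate `℘`, then the `P`-th cyclotomic polynomial `Φ_P(x) = C_P(x)/x`, reduced
modulo `℘`, is a product of `q^(deg P) - 1` distinct monic linear factors over the
field `A/℘A`. -/
theorem cyclotomic_splits_into_distinct_linear_factors_mod_mersenne
    (F : Type) [Field F] [Fintype F]
    (P : Polynomial F) (hP : P.Monic) (hPirr : Irreducible P) (α : F) (hα : α ≠ 0)
    (hM : Irreducible (Polynomial.C α * carlitzEval F P 1))
    (℘ : Polynomial F) (h℘m : ℘.Monic) (h℘irr : Irreducible ℘)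
    (hassoc : Associated (Polynomial.C α * carlitzEval F P 1) ℘) :
    ∃ s : Finset (Polynomial F ⧸ Ideal.span {℘}),
      (((carlitz F P).divX).map (Ideal.Quotient.mk (Ideal.span {℘})) =
        ∏ r ∈ s, (X - Polynomial.C r)) ∧
      s.card = Fintype.card F ^ P.natDegree - 1 := by
  classical
  have hq1 : 1 < Fintype.card F := Fintype.one_lt_card
  set q := Fintype.card F with hq
  set d := P.natDegree with hdd
  set I := Ideal.span ({℘} : Set (Polynomial F)) with hI
  haveI : I.IsMaximal := PrincipalIdealRing.isMaximal_of_irreducible h℘irr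
  letI K := Polynomial F ⧸ I
  letI : Field K := Ideal.Quotient.field I
  set π := Ideal.Quotient.mk I with hπ
  -- ℘ divides C_P(1)
  have hMdvd : ℘ ∣ carlitzEval F P 1 := by
    obtain ⟨t, ht⟩ := hassoc.symm.dvd
    refine ⟨Polynomial.C α⁻¹ * t, ?_⟩
    have : Polynomial.C α⁻¹ * (Polynomial.C α * carlitzEval F P 1)
        = Polynomial.C α⁻¹ * (℘ * t) := by rw [← ht]
    rw [← mul_assoc, ← Polynomial.C_mul, inv_mul_cancel₀ hα, Polynomial.C_1, one_mul] at this
    rw [this]; ring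
  -- key divisibility stability
  have dvd_ce : ∀ (m x : Polynomial F), ℘ ∣ x → ℘ ∣ carlitzEval F m x := by
    intro m x hx
    have h1 : x - 0 ∣ (carlitz F m).eval x - (carlitz F m).eval 0 :=
      Polynomial.sub_dvd_eval_sub x 0 (carlitz F m)
    rw [sub_zero, carlitz_eval_zero, sub_zero] at h1
    exact dvd_trans hx h1
  have ce_dvd_iff : ∀ c : Polynomial F, ℘ ∣ carlitzEval F c 1 ↔ P ∣ c := by
    intro c
    constructor
    · intro h
      by_contra hnd
      obtain ⟨u, v, huv⟩ := (hPirr.coprime_iff_not_dvd.mpr hnd)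
      have h1 : ℘ ∣ carlitzEval F (u * P + v * c) 1 := by
        rw [carlitzEval_add, carlitzEval_mul, carlitzEval_mul]
        exact dvd_add (dvd_ce u _ hMdvd) (dvd_ce v _ h)
      rw [huv, carlitzEval_one] at h1
      exact h℘irr.not_isUnit (isUnit_of_dvd_one h1)
    · rintro ⟨c', rfl⟩
      rw [mul_comm, carlitzEval_mul]
      exact dvd_ce c' _ hMdvd
  -- The P-torsion field
  have hPne : P ≠ 0 := hP.ne_zero
  let b : Module.Basis (Fin P.natDegree) F (AdjoinRoot P) := AdjoinRoot.powerBasisAux hPne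
  letI : Fintype (AdjoinRoot P) := Fintype.ofEquiv _ b.equivFun.toEquiv.symm
  have hcardKP : Fintype.card (AdjoinRoot P) = q ^ d := by
    rw [Module.card_fintype b, Fintype.card_fin]
  choose rep hrep using (AdjoinRoot.mk_surjective (g := P))
  set f : AdjoinRoot P → K := fun x => π (carlitzEval F (rep x) 1) with hf
  -- f is injective away from 0, lands in nonzero roots
  have hsub : ∀ a b' : Polynomial F, carlitzEval F (a - b') 1
      = carlitzEval F a 1 - carlitzEval F b' 1 := by
    intro a b'
    have := carlitzEval_add F (a - b') b' 1
    rw [sub_add_cancel] at this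
    linear_combination -this
  have hπ_zero : ∀ z : Polynomial F, π z = 0 ↔ ℘ ∣ z := fun z =>
    Ideal.Quotient.eq_zero_iff_dvd ℘ z
  have hinj : Set.InjOn f (Finset.univ.erase (0 : AdjoinRoot P)) := by
    intro x hx y hy hxy
    have h1 : π (carlitzEval F (rep x - rep y) 1) = 0 := by
      rw [hsub, map_sub]
      simp only [hf] at hxy
      rw [hxy]; ring
    rw [hπ_zero, ce_dvd_iff] at h1
    have := AdjoinRoot.mk_eq_mk.mpr h1
    rwa [hrep, hrep] at this
  have hne0 : ∀ x : AdjoinRoot P, x ≠ 0 → f x ≠ 0 := by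
    intro x hx h0
    simp only [hf] at h0
    rw [hπ_zero, ce_dvd_iff] at h0
    have : AdjoinRoot.mk P (rep x) = 0 := AdjoinRoot.mk_eq_zero.mpr h0
    rw [hrep] at this
    exact hx this
  -- divX structure
  have hcoeff0 : (carlitz F P).coeff 0 = 0 := by
    rw [Polynomial.coeff_zero_eq_eval_zero]; exact carlitz_eval_zero F P
  have hXdiv : X * (carlitz F P).divX = carlitz F P := by
    have := Polynomial.X_mul_divX_add (carlitz F P)
    rwa [hcoeff0, Polynomial.C_0, add_zero] at this
  have hCm : (carlitz F P).Monic := (carlitz_monic F P hP).1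
  have hCd : (carlitz F P).natDegree = q ^ d := (carlitz_monic F P hP).2
  have hdivXne : (carlitz F P).divX ≠ 0 := by
    intro h
    rw [h, mul_zero] at hXdiv
    exact hCm.ne_zero hXdiv.symm
  have hdivXm : (carlitz F P).divX.Monic := by
    have : ((X : Polynomial (Polynomial F)) * (carlitz F P).divX).leadingCoeff = 1 := by
      rw [hXdiv]; exact hCm
    rwa [Polynomial.leadingCoeff_mul, Polynomial.leadingCoeff_X, one_mul] at this
  have hdivXd : (carlitz F P).divX.natDegree = q ^ d - 1 := by
    have h1 : (X * (carlitz F P).divX).natDegree = q ^ d := by rw [hXdiv, hCd]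
    rw [Polynomial.natDegree_mul Polynomial.X_ne_zero hdivXne, Polynomial.natDegree_X] at h1
    omega
  set g : Polynomial K := ((carlitz F P).divX).map π with hg
  have hgm : g.Monic := hdivXm.map π
  have hgd : g.natDegree = q ^ d - 1 := by rw [hg, hdivXm.natDegree_map, hdivXd]
  -- each f x is a root of g
  have hroot : ∀ x : AdjoinRoot P, x ≠ 0 → g.eval (f x) = 0 := by
    intro x hx
    have h1 : ℘ ∣ carlitzEval F P (carlitzEval F (rep x) 1) := by
      rw [← carlitzEval_mul, mul_comm, carlitzEval_mul]
      exact dvd_ce _ _ hMdvd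
    have h2 : ((carlitz F P).map π).eval (f x) = 0 := by
      simp only [hf]
      rw [Polynomial.eval_map, Polynomial.eval₂_hom]
      exact (hπ_zero _).mpr h1
    rw [← hXdiv, Polynomial.map_mul, Polynomial.map_X, Polynomial.eval_mul,
      Polynomial.eval_X] at h2
    rcases mul_eq_zero.mp h2 with h | h
    · exact absurd h (hne0 x hx)
    · exact h
  -- assemble the finset of roots
  set s : Finset K := (Finset.univ.erase (0 : AdjoinRoot P)).image f with hs
  have hscard : s.card = q ^ d - 1 := by
    rw [hs, Finset.card_image_of_injOn hinj, Finset.card_erase_of_mem (Finset.mem_univ _),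
      Finset.card_univ, hcardKP]
  refine ⟨s, ?_, by rw [hscard]⟩
  -- product of distinct linear factors
  have hgne : g ≠ 0 := hgm.ne_zero
  have hle : s.val ≤ g.roots := by
    rw [Multiset.le_iff_count]
    intro r
    rcases Finset.decidableMem r s with hr | hr
    · simp [Multiset.count_eq_zero_of_notMem hr]
    · have h1 : s.val.count r = 1 := Multiset.count_eq_one_of_mem s.nodup hr
      rw [h1, Polynomial.count_roots]
      rw [hs, Finset.mem_image] at hr
      obtain ⟨x, hx, rfl⟩ := hr
      have hx0 : x ≠ 0 := (Finset.mem_erase.mp hx).1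
      exact (Polynomial.rootMultiplicity_pos hgne).mpr (hroot x hx0)
  have hdvd : (∏ r ∈ s, (X - Polynomial.C r)) ∣ g := by
    rw [Finset.prod_eq_multiset_prod]
    exact (Multiset.prod_X_sub_C_dvd_iff_le_roots hgne s.val).mpr hle
  have hpm : (∏ r ∈ s, (X - Polynomial.C r)).Monic :=
    Polynomial.monic_prod_of_monic _ _ fun r _ => Polynomial.monic_X_sub_C r
  have hpd : (∏ r ∈ s, (X - Polynomial.C r)).natDegree = s.card := by
    rw [Polynomial.natDegree_prod _ _ fun r _ => (Polynomial.monic_X_sub_C r).ne_zero]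
    simp
  have := Polynomial.eq_leadingCoeff_mul_of_monic_of_dvd_of_natDegree_le hpm hdvd
    (by rw [hpd, hscard, hgd])
  rw [hgm.leadingCoeff, Polynomial.C_1, one_mul] at this
  exact this
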